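/- Let A(z) = −8/(1−z²)² for z in the open unit disc 𝔻. For each k > 0, the function f_k(z) = (1−z²)^{1/2} [ ((1−z)/(1+z))^{3/2} + k ((1−z)/(1+z))^{−3/2} ] (principal branches; note (1−z)/(1+z) lies in the right half-plane and 1−z² has positive real part for z ∈ 𝔻) is a non-trivial solution of f'' + A f = 0; its zeros in 𝔻 are exactly the two points z₁ = (1 − k^{1/3} e^{iπ/3})/(1 + k^{1/3} e^{iπ/3}) and z₂ = (1 − k^{1/3} e^{−iπ/3})/(1 + k^{1/3} e^{−iπ/3}), and z₁, z₂ → 1 as k → 0⁺. Consequently, for each δ > 0 there exists a non-trivial solution of f'' + A f = 0 having two distinct zeros in D(1,δ) ∩ 𝔻, even though |A(x)|(1−x²)² = 8 > 3 for all x ∈ (0,1). -/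

import Mathlib

open Complex Metric Filter Topology
open scoped Real

/-- The coefficient `A(z) = −8/(1−z²)²`. -/
noncomputable def A15 (z : ℂ) : ℂ := -8 / (1 - z ^ 2) ^ 2

/-- The solution `f_k(z) = (1−z²)^{1/2} [((1−z)/(1+z))^{3/2} + k ((1−z)/(1+z))^{−3/2}]`
(principal branches). -/
noncomputable def f15 (k : ℝ) (z : ℂ) : ℂ :=
  (1 - z ^ 2) ^ ((1 : ℂ) / 2) *
    (((1 - z) / (1 + z)) ^ ((3 : ℂ) / 2) +
      (k : ℂ) * ((1 - z) / (1 + z)) ^ (-((3 : ℂ) / 2)))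

/-- The zeros `z₁(k)` and `z₂(k)`. -/
noncomputable def z15₁ (k : ℝ) : ℂ :=
  (1 - (k ^ ((1:ℝ)/3) : ℝ) * Complex.exp ((π / 3 : ℝ) * Complex.I)) /
    (1 + (k ^ ((1:ℝ)/3) : ℝ) * Complex.exp ((π / 3 : ℝ) * Complex.I))

noncomputable def z15₂ (k : ℝ) : ℂ :=
  (1 - (k ^ ((1:ℝ)/3) : ℝ) * Complex.exp (-(π / 3 : ℝ) * Complex.I)) /
    (1 + (k ^ ((1:ℝ)/3) : ℝ) * Complex.exp (-(π / 3 : ℝ) * Complex.I))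

/-!
On the disc both `1 - z` and `1 + z` lie in the right half-plane, where principal powers are
multiplicative, so `f_k` collapses to the rational function
`(1 - z)² / (1 + z) + k (1 + z)² / (1 - z) = ((1 - z)³ + k (1 + z)³) / (1 - z²)`,
and the equation `f'' + A f = 0` becomes a polynomial identity. Writing `r = k^{1/3}` and
`ω = e^{iπ/3}`, the numerator factors as
`(1 - z - rω(1 + z)) (1 - z - rω̄(1 + z)) (1 - z + r(1 + z))`; the last factor has positive real
part on the disc, and the first two vanish exactly at `z = (1 - rω)/(1 + rω)` and its
conjugate, which tend to `1` with `r`.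
-/

namespace Complex

theorem mul_cpow_of_arg_add_mem_Ioc {a b : ℂ} (ha : a ≠ 0) (hb : b ≠ 0)
    (hab : a.arg + b.arg ∈ Set.Ioc (-π) π) (s : ℂ) : (a * b) ^ s = a ^ s * b ^ s := by
  rw [cpow_def_of_ne_zero (mul_ne_zero ha hb), cpow_def_of_ne_zero ha, cpow_def_of_ne_zero hb,
    log_mul ha hb hab, add_mul, exp_add]

theorem mul_cpow_of_re_pos {a b : ℂ} (ha : 0 < a.re) (hb : 0 < b.re) (s : ℂ) :
    (a * b) ^ s = a ^ s * b ^ s := by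
  obtain ⟨ha₁, ha₂⟩ := abs_lt.1 (abs_arg_lt_pi_div_two_iff.2 (Or.inl ha))
  obtain ⟨hb₁, hb₂⟩ := abs_lt.1 (abs_arg_lt_pi_div_two_iff.2 (Or.inl hb))
  exact mul_cpow_of_arg_add_mem_Ioc (ne_zero_of_re_pos ha) (ne_zero_of_re_pos hb)
    ⟨by linarith, by linarith⟩ s

theorem div_cpow_of_re_pos {a b : ℂ} (ha : 0 < a.re) (hb : 0 < b.re) (s : ℂ) :
    (a / b) ^ s = a ^ s * b ^ (-s) := by
  have hb_inv : 0 < b⁻¹.re := by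
    rw [inv_re]
    exact div_pos hb (normSq_pos.2 (ne_zero_of_re_pos hb))
  have hb_arg : b.arg ≠ π := by
    have := (abs_lt.1 (abs_arg_lt_pi_div_two_iff.2 (Or.inl hb))).2
    linarith [Real.pi_pos]
  rw [div_eq_mul_inv, mul_cpow_of_re_pos ha hb_inv, inv_cpow _ _ hb_arg, cpow_neg]

end Complex

lemma re_one_sub_pos_of_mem_ball {z : ℂ} (hz : z ∈ ball (0 : ℂ) 1) : 0 < (1 - z).re := by
  have := abs_lt.1 ((abs_re_le_norm z).trans_lt (mem_ball_zero_iff.1 hz))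
  simp only [sub_re, one_re]
  linarith

lemma re_one_add_pos_of_mem_ball {z : ℂ} (hz : z ∈ ball (0 : ℂ) 1) : 0 < (1 + z).re := by
  have := abs_lt.1 ((abs_re_le_norm z).trans_lt (mem_ball_zero_iff.1 hz))
  simp only [add_re, one_re]
  linarith

lemma one_sub_ne_zero_of_mem_ball {z : ℂ} (hz : z ∈ ball (0 : ℂ) 1) : 1 - z ≠ 0 :=
  ne_zero_of_re_pos (re_one_sub_pos_of_mem_ball hz)

lemma one_add_ne_zero_of_mem_ball {z : ℂ} (hz : z ∈ ball (0 : ℂ) 1) : 1 + z ≠ 0 :=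
  ne_zero_of_re_pos (re_one_add_pos_of_mem_ball hz)

noncomputable def f15Rat (k : ℝ) (z : ℂ) : ℂ :=
  (1 - z) ^ 2 / (1 + z) + k * ((1 + z) ^ 2 / (1 - z))

lemma eqOn_f15_f15Rat (k : ℝ) : Set.EqOn (f15 k) (f15Rat k) (ball (0 : ℂ) 1) := by
  intro z hz
  have ha := re_one_sub_pos_of_mem_ball hz
  have hb := re_one_add_pos_of_mem_ball hz
  have half_add : ∀ c : ℂ, c ≠ 0 → c ^ ((1 : ℂ) / 2) * c ^ ((3 : ℂ) / 2) = c ^ 2 := by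
    intro c hc
    rw [← cpow_add _ _ hc]
    norm_num
  have half_sub : ∀ c : ℂ, c ≠ 0 → c ^ ((1 : ℂ) / 2) * c ^ (-((3 : ℂ) / 2)) = c⁻¹ := by
    intro c hc
    rw [← cpow_add _ _ hc]
    norm_num [cpow_neg_one]
  have h₁ := half_add _ (ne_zero_of_re_pos ha)
  have h₂ := half_sub _ (ne_zero_of_re_pos hb)
  have h₃ := half_sub _ (ne_zero_of_re_pos ha)
  have h₄ := half_add _ (ne_zero_of_re_pos hb)
  rw [f15, f15Rat, show (1 : ℂ) - z ^ 2 = (1 - z) * (1 + z) by ring, mul_cpow_of_re_pos ha hb,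
    div_cpow_of_re_pos ha hb, div_cpow_of_re_pos ha hb, neg_neg]
  linear_combination ((1 + z) ^ ((1 : ℂ) / 2) * (1 + z) ^ (-((3 : ℂ) / 2))) * h₁ +
    (1 - z) ^ 2 * h₂ + (k * (1 + z) ^ ((1 : ℂ) / 2) * (1 + z) ^ ((3 : ℂ) / 2)) * h₃ +
    (k * (1 - z)⁻¹) * h₄

theorem deriv_deriv_eqOn_of_eqOn {𝕜 F : Type*} [NontriviallyNormedField 𝕜] [NormedAddCommGroup F]
    [NormedSpace 𝕜 F] {U : Set 𝕜} (hU : IsOpen U) {f g g' g'' : 𝕜 → F} (hfg : Set.EqOn f g U)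
    (hg : ∀ z ∈ U, HasDerivAt g (g' z) z) (hg' : ∀ z ∈ U, HasDerivAt g' (g'' z) z) :
    Set.EqOn (deriv (deriv f)) g'' U := by
  have hf' : Set.EqOn (deriv f) g' U := fun z hz =>
    ((eventuallyEq_of_mem (hU.mem_nhds hz) hfg).deriv_eq).trans (hg z hz).deriv
  exact fun z hz => ((eventuallyEq_of_mem (hU.mem_nhds hz) hf').deriv_eq).trans (hg' z hz).deriv

section Derivatives

variable (k : ℝ) {z : ℂ}

lemma hasDerivAt_f15Rat (h₁ : 1 - z ≠ 0) (h₂ : 1 + z ≠ 0) :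
    HasDerivAt (f15Rat k) (1 - 4 / (1 + z) ^ 2 + k * (4 / (1 - z) ^ 2 - 1)) z := by
  have hsub : HasDerivAt (fun z : ℂ => 1 - z) (-1) z := (hasDerivAt_id z).const_sub 1
  have hadd : HasDerivAt (fun z : ℂ => 1 + z) 1 z := (hasDerivAt_id z).const_add 1
  refine (((hsub.fun_pow 2).fun_div hadd h₂).fun_add
    (((hadd.fun_pow 2).fun_div hsub h₁).const_mul (k : ℂ))).congr_deriv ?_
  field_simp
  ring

lemma hasDerivAt_f15Rat_deriv (h₁ : 1 - z ≠ 0) (h₂ : 1 + z ≠ 0) :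
    HasDerivAt (fun z : ℂ => 1 - 4 / (1 + z) ^ 2 + k * (4 / (1 - z) ^ 2 - 1))
      (8 / (1 + z) ^ 3 + k * (8 / (1 - z) ^ 3)) z := by
  have hsub : HasDerivAt (fun z : ℂ => 1 - z) (-1) z := (hasDerivAt_id z).const_sub 1
  have hadd : HasDerivAt (fun z : ℂ => 1 + z) 1 z := (hasDerivAt_id z).const_add 1
  refine ((((hasDerivAt_const z (4 : ℂ)).fun_div (hadd.fun_pow 2) (pow_ne_zero 2 h₂)).const_sub
    1).fun_add ((((hasDerivAt_const z (4 : ℂ)).fun_div (hsub.fun_pow 2)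
      (pow_ne_zero 2 h₁)).sub_const 1).const_mul (k : ℂ))).congr_deriv ?_
  field_simp
  ring

lemma f15Rat_ode (h₁ : 1 - z ≠ 0) (h₂ : 1 + z ≠ 0) :
    8 / (1 + z) ^ 3 + k * (8 / (1 - z) ^ 3) + A15 z * f15Rat k z = 0 := by
  rw [f15Rat, A15, show (1 : ℂ) - z ^ 2 = (1 - z) * (1 + z) by ring]
  field_simp
  ring

end Derivatives

lemma analyticOnNhd_f15 (k : ℝ) : AnalyticOnNhd ℂ (f15 k) (ball (0 : ℂ) 1) := by
  have : DifferentiableOn ℂ (f15Rat k) (ball (0 : ℂ) 1) := fun z hz =>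
    (hasDerivAt_f15Rat k (one_sub_ne_zero_of_mem_ball hz)
      (one_add_ne_zero_of_mem_ball hz)).differentiableAt.differentiableWithinAt
  exact (this.analyticOnNhd isOpen_ball).congr isOpen_ball (eqOn_f15_f15Rat k).symm

lemma f15_ode (k : ℝ) {z : ℂ} (hz : z ∈ ball (0 : ℂ) 1) :
    deriv (deriv (f15 k)) z + A15 z * f15 k z = 0 := by
  rw [deriv_deriv_eqOn_of_eqOn isOpen_ball (eqOn_f15_f15Rat k)
    (fun w hw => hasDerivAt_f15Rat k (one_sub_ne_zero_of_mem_ball hw)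
      (one_add_ne_zero_of_mem_ball hw))
    (fun w hw => hasDerivAt_f15Rat_deriv k (one_sub_ne_zero_of_mem_ball hw)
      (one_add_ne_zero_of_mem_ball hw)) hz, eqOn_f15_f15Rat k hz]
  exact f15Rat_ode k (one_sub_ne_zero_of_mem_ball hz) (one_add_ne_zero_of_mem_ball hz)

lemma f15_zero (k : ℝ) : f15 k 0 = 1 + k := by
  rw [eqOn_f15_f15Rat k (mem_ball_self one_pos), f15Rat]
  ring

lemma not_forall_f15_eq_zero {k : ℝ} (hk : k ≠ -1) : ¬ ∀ z ∈ ball (0 : ℂ) 1, f15 k z = 0 := by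
  intro h
  have h₀ := h 0 (mem_ball_self one_pos)
  rw [f15_zero] at h₀
  exact hk (by exact_mod_cast eq_neg_of_add_eq_zero_right h₀)

lemma f15_eq_cube_div {k : ℝ} {z : ℂ} (hz : z ∈ ball (0 : ℂ) 1) :
    f15 k z = ((1 - z) ^ 3 + k * (1 + z) ^ 3) / ((1 - z) * (1 + z)) := by
  have h₁ := one_sub_ne_zero_of_mem_ball hz
  have h₂ := one_add_ne_zero_of_mem_ball hz
  rw [eqOn_f15_f15Rat k hz, f15Rat]
  field_simp

lemma exp_pi_div_three_add_exp_neg :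
    exp ((π / 3 : ℝ) * I) + exp (-(π / 3 : ℝ) * I) = 1 := by
  rw [← two_cos, ← ofReal_cos, Real.cos_pi_div_three]
  norm_num

lemma exp_pi_div_three_mul_exp_neg :
    exp ((π / 3 : ℝ) * I) * exp (-(π / 3 : ℝ) * I) = 1 := by
  rw [← exp_add, ← add_mul, add_neg_cancel, zero_mul, exp_zero]

lemma re_exp_pi_div_three_pos : 0 < (exp ((π / 3 : ℝ) * I)).re := by
  rw [exp_ofReal_mul_I_re, Real.cos_pi_div_three]
  norm_num

lemma re_exp_neg_pi_div_three_pos : 0 < (exp (-(π / 3 : ℝ) * I)).re := by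
  rw [← ofReal_neg, exp_ofReal_mul_I_re, Real.cos_neg, Real.cos_pi_div_three]
  norm_num

lemma cube_add_mul_cube_eq {a b c ω ω' : ℂ} (hsum : ω + ω' = 1) (hprod : ω * ω' = 1) :
    a ^ 3 + c ^ 3 * b ^ 3 = (a - c * ω * b) * (a - c * ω' * b) * (a + c * b) := by
  linear_combination (a * c * b * (a + c * b)) * hsum - (c ^ 2 * b ^ 2 * (a + c * b)) * hprod

lemma one_add_ne_zero_of_re_pos {c : ℂ} (hc : 0 < c.re) : 1 + c ≠ 0 :=
  ne_zero_of_re_pos (by rw [add_re, one_re]; linarith)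

lemma one_sub_div_one_add_mem_ball {c : ℂ} (hc : 0 < c.re) :
    (1 - c) / (1 + c) ∈ ball (0 : ℂ) 1 := by
  have hlt : ‖1 - c‖ < ‖1 + c‖ := by
    refine lt_of_pow_lt_pow_left₀ 2 (norm_nonneg _) ?_
    rw [Complex.sq_norm, Complex.sq_norm, normSq_apply, normSq_apply]
    simp only [sub_re, sub_im, add_re, add_im, one_re, one_im]
    nlinarith
  rw [mem_ball_zero_iff, norm_div, div_lt_one ((norm_nonneg _).trans_lt hlt)]
  exact hlt

lemma eq_one_sub_div_one_add_iff {c z : ℂ} (hc : 1 + c ≠ 0) :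
    z = (1 - c) / (1 + c) ↔ 1 - z - c * (1 + z) = 0 := by
  rw [eq_div_iff hc]
  constructor <;> intro h <;> linear_combination -h

lemma exp_pi_div_three_ne_exp_neg : exp ((π / 3 : ℝ) * I) ≠ exp (-(π / 3 : ℝ) * I) := by
  intro h
  have hsum := exp_pi_div_three_add_exp_neg
  have hprod := exp_pi_div_three_mul_exp_neg
  rw [h] at hsum hprod
  have : (4 : ℂ) = 1 := by
    linear_combination (2 * exp (-(π / 3 : ℝ) * I) + 1) * hsum - 4 * hprod
  norm_num at this

lemma one_sub_div_one_add_injective {c d : ℂ} (hc : 1 + c ≠ 0) (hd : 1 + d ≠ 0)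
    (h : (1 - c) / (1 + c) = (1 - d) / (1 + d)) : c = d := by
  rw [div_eq_div_iff hc hd] at h
  linear_combination -h / 2

section Zeros

variable {k : ℝ}

lemma re_rpow_mul_exp_pi_div_three_pos (hk : 0 < k) :
    0 < (((k ^ ((1 : ℝ) / 3) : ℝ) : ℂ) * exp ((π / 3 : ℝ) * I)).re := by
  rw [re_ofReal_mul]
  exact mul_pos (Real.rpow_pos_of_pos hk _) re_exp_pi_div_three_pos

lemma re_rpow_mul_exp_neg_pi_div_three_pos (hk : 0 < k) :
    0 < (((k ^ ((1 : ℝ) / 3) : ℝ) : ℂ) * exp (-(π / 3 : ℝ) * I)).re := by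
  rw [re_ofReal_mul]
  exact mul_pos (Real.rpow_pos_of_pos hk _) re_exp_neg_pi_div_three_pos

lemma z15₁_mem_ball (hk : 0 < k) : z15₁ k ∈ ball (0 : ℂ) 1 :=
  one_sub_div_one_add_mem_ball (re_rpow_mul_exp_pi_div_three_pos hk)

lemma z15₂_mem_ball (hk : 0 < k) : z15₂ k ∈ ball (0 : ℂ) 1 :=
  one_sub_div_one_add_mem_ball (re_rpow_mul_exp_neg_pi_div_three_pos hk)

lemma z15₁_ne_z15₂ (hk : 0 < k) : z15₁ k ≠ z15₂ k := fun h =>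
  exp_pi_div_three_ne_exp_neg <|
    mul_left_cancel₀ (ofReal_ne_zero.2 (Real.rpow_pos_of_pos hk _).ne') <|
      one_sub_div_one_add_injective
        (one_add_ne_zero_of_re_pos (re_rpow_mul_exp_pi_div_three_pos hk))
        (one_add_ne_zero_of_re_pos (re_rpow_mul_exp_neg_pi_div_three_pos hk)) h

lemma f15_eq_zero_iff (hk : 0 < k) {z : ℂ} (hz : z ∈ ball (0 : ℂ) 1) :
    f15 k z = 0 ↔ z = z15₁ k ∨ z = z15₂ k := by
  set r : ℝ := k ^ ((1 : ℝ) / 3) with hr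
  have hr_pos : 0 < r := Real.rpow_pos_of_pos hk _
  have hk_eq : (k : ℂ) = (r : ℂ) ^ 3 := by
    rw [← ofReal_pow, hr, ← Real.rpow_natCast, ← Real.rpow_mul hk.le]
    norm_num
  have h_real_root : 1 - z + r * (1 + z) ≠ 0 := by
    refine ne_zero_of_re_pos ?_
    rw [add_re, re_ofReal_mul]
    exact add_pos (re_one_sub_pos_of_mem_ball hz)
      (mul_pos hr_pos (re_one_add_pos_of_mem_ball hz))
  rw [f15_eq_cube_div hz, div_eq_zero_iff,
    or_iff_left (mul_ne_zero (one_sub_ne_zero_of_mem_ball hz) (one_add_ne_zero_of_mem_ball hz)),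
    hk_eq, cube_add_mul_cube_eq exp_pi_div_three_add_exp_neg exp_pi_div_three_mul_exp_neg,
    mul_eq_zero, mul_eq_zero, or_iff_left h_real_root, z15₁, z15₂,
    eq_one_sub_div_one_add_iff (one_add_ne_zero_of_re_pos (re_rpow_mul_exp_pi_div_three_pos hk)),
    eq_one_sub_div_one_add_iff
      (one_add_ne_zero_of_re_pos (re_rpow_mul_exp_neg_pi_div_three_pos hk)), mul_assoc, mul_assoc]

end Zeros

theorem tendsto_one_sub_div_one_add_rpow {p : ℝ} (hp : 0 < p) (c : ℂ) :
    Tendsto (fun k : ℝ => (1 - ((k ^ p : ℝ) : ℂ) * c) / (1 + ((k ^ p : ℝ) : ℂ) * c))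
      (𝓝[>] 0) (𝓝 1) := by
  have hcont : ContinuousAt
      (fun k : ℝ => (1 - ((k ^ p : ℝ) : ℂ) * c) / (1 + ((k ^ p : ℝ) : ℂ) * c)) 0 := by
    have hrpow := Real.continuousAt_rpow_const 0 p (Or.inr hp.le)
    refine ContinuousAt.div (by fun_prop) (by fun_prop) ?_
    simp [Real.zero_rpow hp.ne']
  simpa [Real.zero_rpow hp.ne'] using hcont.tendsto.mono_left nhdsWithin_le_nhds

lemma tendsto_z15₁ : Tendsto z15₁ (𝓝[>] (0 : ℝ)) (𝓝 1) :=
  tendsto_one_sub_div_one_add_rpow (by norm_num) _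

lemma tendsto_z15₂ : Tendsto z15₂ (𝓝[>] (0 : ℝ)) (𝓝 1) :=
  tendsto_one_sub_div_one_add_rpow (by norm_num) _

lemma norm_A15_ofReal_mul_sq {x : ℝ} (hx : x ^ 2 ≠ 1) : ‖A15 (x : ℂ)‖ * (1 - x ^ 2) ^ 2 = 8 := by
  have hx' : (1 - x ^ 2) ^ 2 ≠ 0 := pow_ne_zero 2 (sub_ne_zero.2 hx.symm)
  rw [A15, ← ofReal_one, ← ofReal_pow, ← ofReal_sub, ← ofReal_pow, ← ofReal_ofNat, ← ofReal_neg,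
    ← ofReal_div, norm_real, Real.norm_eq_abs, abs_div, abs_neg,
    abs_of_pos (by norm_num : (0 : ℝ) < 8), abs_sq, div_mul_cancel₀ _ hx']

theorem stmt_15 :
    (∀ k : ℝ, 0 < k →
      AnalyticOnNhd ℂ (f15 k) (ball (0:ℂ) 1) ∧
      (∀ z ∈ ball (0:ℂ) 1, deriv (deriv (f15 k)) z + A15 z * f15 k z = 0) ∧
      ¬ (∀ z ∈ ball (0:ℂ) 1, f15 k z = 0) ∧
      z15₁ k ∈ ball (0:ℂ) 1 ∧ z15₂ k ∈ ball (0:ℂ) 1 ∧ z15₁ k ≠ z15₂ k ∧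
      (∀ z ∈ ball (0:ℂ) 1, (f15 k z = 0 ↔ z = z15₁ k ∨ z = z15₂ k))) ∧
    Tendsto z15₁ (𝓝[>] (0:ℝ)) (𝓝 1) ∧ Tendsto z15₂ (𝓝[>] (0:ℝ)) (𝓝 1) ∧
    (∀ δ : ℝ, 0 < δ → ∃ f : ℂ → ℂ,
      AnalyticOnNhd ℂ f (ball (0:ℂ) 1) ∧
      (∀ z ∈ ball (0:ℂ) 1, deriv (deriv f) z + A15 z * f z = 0) ∧
      ¬ (∀ z ∈ ball (0:ℂ) 1, f z = 0) ∧
      ∃ z₁ ∈ ball (1:ℂ) δ ∩ ball (0:ℂ) 1, ∃ z₂ ∈ ball (1:ℂ) δ ∩ ball (0:ℂ) 1,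
        z₁ ≠ z₂ ∧ f z₁ = 0 ∧ f z₂ = 0) ∧
    (∀ x : ℝ, x ∈ Set.Ioo (0:ℝ) 1 →
      ‖A15 (x : ℂ)‖ * (1 - x ^ 2) ^ 2 = 8) := by
  refine ⟨fun k hk => ?_, tendsto_z15₁, tendsto_z15₂, fun δ hδ => ?_,
    fun x hx => norm_A15_ofReal_mul_sq (by nlinarith [hx.1, hx.2])⟩
  · exact ⟨analyticOnNhd_f15 k, fun _ hz => f15_ode k hz, not_forall_f15_eq_zero (by linarith),
      z15₁_mem_ball hk, z15₂_mem_ball hk, z15₁_ne_z15₂ hk, fun _ hz => f15_eq_zero_iff hk hz⟩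
  · obtain ⟨k, hk : 0 < k, h₁, h₂⟩ := (eventually_mem_nhdsWithin.and
      ((tendsto_z15₁.eventually_mem (ball_mem_nhds 1 hδ)).and
        (tendsto_z15₂.eventually_mem (ball_mem_nhds 1 hδ)))).exists
    exact ⟨f15 k, analyticOnNhd_f15 k, fun _ hz => f15_ode k hz,
      not_forall_f15_eq_zero (by linarith), z15₁ k, ⟨h₁, z15₁_mem_ball hk⟩,
      z15₂ k, ⟨h₂, z15₂_mem_ball hk⟩, z15₁_ne_z15₂ hk,
      (f15_eq_zero_iff hk (z15₁_mem_ball hk)).2 (Or.inl rfl),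
      (f15_eq_zero_iff hk (z15₂_mem_ball hk)).2 (Or.inr rfl)⟩
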